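/- Let p be a Markov kernel on a graph G = (Ω,E) with graph distance d such that p(x,y) > 0 implies d(x,y) ≤ 1. Then for all x,y ∈ Ω, d(x,y) ≤ W₁(p(x,·),p(y,·)) + 2. Consequently, if (Ω,p,d) has coarse Ricci curvature at least 1/α, then the diameter of (Ω,d) is at most 2α. -/

import Mathlib

open scoped BigOperators

noncomputable section

/-- A probability mass function on a (countable) space. -/
def IsProb {Ω : Type*} (μ : Ω → ℝ) : Prop :=
  (∀ x, 0 ≤ μ x) ∧ HasSum μ 1

/-- A coupling of two probability mass functions. -/
def IsCoupling {Ω : Type*} (γ : Ω × Ω → ℝ) (μ ν : Ω → ℝ) : Prop :=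
  (∀ z, 0 ≤ γ z) ∧ (∀ x, HasSum (fun y => γ (x, y)) (μ x)) ∧
    (∀ y, HasSum (fun x => γ (x, y)) (ν y))

/-- Wasserstein 1-distance with cost `d`: infimum of the expected cost over couplings. -/
def W1 {Ω : Type*} (d : Ω → Ω → ℝ) (μ ν : Ω → ℝ) : ℝ :=
  sInf { r | ∃ γ, IsCoupling γ μ ν ∧ HasSum (fun z : Ω × Ω => γ z * d z.1 z.2) r }

/-- Relative entropy (Kullback divergence) `H(ν‖μ)` on a countable space. -/
def relent {Ω : Type*} (ν μ : Ω → ℝ) : ℝ :=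
  ∑' x, ν x * Real.log (ν x / μ x)

/-- Absolute continuity of pmfs. -/
def AC {Ω : Type*} (ν μ : Ω → ℝ) : Prop := ∀ x, ν x ≠ 0 → μ x ≠ 0

/-- `f` is `L`-Lipschitz with respect to the cost `d`. -/
def LipWith {Ω : Type*} (d : Ω → Ω → ℝ) (L : ℝ) (f : Ω → ℝ) : Prop :=
  ∀ x y, |f x - f y| ≤ L * d x y

/-- The Lipschitz seminorm `‖f‖_Lip` (least Lipschitz constant). -/
def lipNorm {Ω : Type*} (d : Ω → Ω → ℝ) (f : Ω → ℝ) : ℝ :=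
  sInf { L | 0 ≤ L ∧ LipWith d L f }

/-! Every coupling of `p(x,·)` and `p(y,·)` lives on pairs `(a, b)` with `d(x,a), d(y,b) ≤ 1`,
where `d(a,b) ≥ d(x,y) - 2`, so its cost is at least `d(x,y) - 2`. The product coupling has
finite cost, so the infimum defining `W₁` is not the junk value `sInf ∅ = 0`. -/

namespace IsCoupling

variable {Ω : Type*} {γ : Ω × Ω → ℝ} {μ ν : Ω → ℝ}

theorem le_left (hγ : IsCoupling γ μ ν) (z : Ω × Ω) : γ z ≤ μ z.1 :=
  le_hasSum (hγ.2.1 z.1) z.2 fun _ _ => hγ.1 _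

theorem le_right (hγ : IsCoupling γ μ ν) (z : Ω × Ω) : γ z ≤ ν z.2 :=
  le_hasSum (hγ.2.2 z.2) z.1 fun _ _ => hγ.1 _

theorem left_ne_zero (hγ : IsCoupling γ μ ν) {z : Ω × Ω} (hz : γ z ≠ 0) : μ z.1 ≠ 0 :=
  ((lt_of_le_of_ne (hγ.1 z) hz.symm).trans_le (hγ.le_left z)).ne'

theorem right_ne_zero (hγ : IsCoupling γ μ ν) {z : Ω × Ω} (hz : γ z ≠ 0) : ν z.2 ≠ 0 :=
  ((lt_of_le_of_ne (hγ.1 z) hz.symm).trans_le (hγ.le_right z)).ne'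

theorem hasSum_one (hγ : IsCoupling γ μ ν) (hμ : HasSum μ 1) : HasSum γ 1 := by
  have hsum : Summable γ :=
    (summable_prod_of_nonneg hγ.1).2
      ⟨fun a => (hγ.2.1 a).summable, by simpa only [(hγ.2.1 _).tsum_eq] using hμ.summable⟩
  have hmarg : HasSum μ (∑' z, γ z) := hsum.hasSum.prod_fiberwise hγ.2.1
  simpa only [hmarg.unique hμ] using hsum.hasSum

end IsCoupling

theorem isCoupling_mul {Ω : Type*} {μ ν : Ω → ℝ} (hμ : IsProb μ) (hν : IsProb ν) :
    IsCoupling (fun z => μ z.1 * ν z.2) μ ν :=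
  ⟨fun z => mul_nonneg (hμ.1 z.1) (hν.1 z.2),
    fun a => by simpa using hν.2.mul_left (μ a),
    fun b => by simpa using hμ.2.mul_right (ν b)⟩

theorem le_of_hasSum_mul_of_le_on_support {ι : Type*} {w f : ι → ℝ} {c r : ℝ}
    (hw0 : ∀ i, 0 ≤ w i) (hw : HasSum w 1) (hr : HasSum (fun i => w i * f i) r)
    (hc : ∀ i, w i ≠ 0 → c ≤ f i) : c ≤ r := by
  have hpt : ∀ i, w i * c ≤ w i * f i := fun i => by
    by_cases hi : w i = 0
    · simp [hi]
    · exact mul_le_mul_of_nonneg_left (hc i hi) (hw0 i)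
  simpa using hasSum_le hpt (hw.mul_right c) hr

section W1

variable {Ω : Type*} {d : Ω → Ω → ℝ} {μ ν : Ω → ℝ}

theorem exists_coupling_hasSum_cost (hμ : IsProb μ) (hν : IsProb ν) {C : ℝ}
    (hd0 : ∀ a b, 0 ≤ d a b) (hdC : ∀ a b, μ a ≠ 0 → ν b ≠ 0 → d a b ≤ C) :
    ∃ r γ, IsCoupling γ μ ν ∧ HasSum (fun z : Ω × Ω => γ z * d z.1 z.2) r := by
  have hprod := isCoupling_mul hμ hν
  have hle : ∀ z : Ω × Ω, μ z.1 * ν z.2 * d z.1 z.2 ≤ μ z.1 * ν z.2 * C := fun z => by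
    by_cases hz : μ z.1 * ν z.2 = 0
    · simp [hz]
    · exact mul_le_mul_of_nonneg_left (hdC _ _ (left_ne_zero_of_mul hz)
        (right_ne_zero_of_mul hz)) (hprod.1 z)
  have hsum : Summable fun z : Ω × Ω => μ z.1 * ν z.2 :=
    hμ.2.summable.mul_of_nonneg hν.2.summable hμ.1 hν.1
  exact ⟨_, _, hprod,
    (Summable.of_nonneg_of_le (fun z => mul_nonneg (hprod.1 z) (hd0 _ _)) hle
      (hsum.mul_right C)).hasSum⟩

theorem le_W1 (hμ : IsProb μ) {c : ℝ}
    (hne : ∃ r γ, IsCoupling γ μ ν ∧ HasSum (fun z : Ω × Ω => γ z * d z.1 z.2) r)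
    (hc : ∀ γ, IsCoupling γ μ ν → ∀ z, γ z ≠ 0 → c ≤ d z.1 z.2) : c ≤ W1 d μ ν :=
  le_csInf hne fun _ ⟨γ, hγ, hr⟩ =>
    le_of_hasSum_mul_of_le_on_support hγ.1 (hγ.hasSum_one hμ.2) hr (hc γ hγ)

end W1

/-- if transitions move by distance at most `1`, then
`d(x,y) ≤ W₁(p(x,·),p(y,·)) + 2`; consequently coarse Ricci curvature at least `1/α`
forces the diameter to be at most `2α`. -/
theorem dist_le_W1_add_two_and_diam_bound {Ω : Type*} [MetricSpace Ω]
    (p : Ω → Ω → ℝ)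
    (hp : ∀ x, IsProb (p x))
    (hstep : ∀ x y, p x y ≠ 0 → dist x y ≤ 1) :
    (∀ x y : Ω, dist x y ≤ W1 (fun a b => dist a b) (p x) (p y) + 2) ∧
    (∀ α : ℝ, 1 ≤ α →
      (∀ x y : Ω, W1 (fun a b => dist a b) (p x) (p y) ≤ (1 - 1/α) * dist x y) →
      ∀ x y : Ω, dist x y ≤ 2 * α) := by
  have hW1 : ∀ x y : Ω, dist x y ≤ W1 (fun a b => dist a b) (p x) (p y) + 2 := by
    intro x y
    have hsupp : ∀ a b, p x a ≠ 0 → p y b ≠ 0 →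
        dist x y - 2 ≤ dist a b ∧ dist a b ≤ dist x y + 2 := fun a b ha hb => by
      have hxa := hstep x a ha
      have hyb := hstep y b hb
      constructor
      · linarith [dist_triangle4 x a b y, dist_comm b y]
      · linarith [dist_triangle4 a x y b, dist_comm a x]
    have hne := exists_coupling_hasSum_cost (hp x) (hp y) (fun _ _ => dist_nonneg)
      fun a b ha hb => (hsupp a b ha hb).2
    have := le_W1 (hp x) hne fun γ hγ z hz =>
      (hsupp _ _ (hγ.left_ne_zero hz) (hγ.right_ne_zero hz)).1
    linarith
  refine ⟨hW1, fun α hα hcurv x y => ?_⟩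
  have hα0 : 0 < α := one_pos.trans_le hα
  have h : dist x y / α ≤ 2 := by
    have : dist x y ≤ (1 - 1 / α) * dist x y + 2 := by linarith [hW1 x y, hcurv x y]
    rw [sub_mul, one_mul, one_div_mul_eq_div] at this
    linarith
  rwa [div_le_iff₀ hα0] at h
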